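/- For any MDP with discount factor γ ∈ (0,1) and any two policies π and π̄, the discounted occupancy measures satisfy D_TV(ρ^π, ρ^π̄) ≤ (1/(1−γ))·max_s D_TV(π(·|s), π̄(·|s)). -/
import Mathlib


open Finset

/-- State marginal distribution at step `h` under transition kernel `P`,
policy `π`, and initial distribution `μ`. -/
def stateDist {S A : Type*} [Fintype S] [Fintype A]
    (P : S → A → S → ℝ) (π : S → A → ℝ) (μ : S → ℝ) : ℕ → S → ℝ
  | 0 => μ
  | h + 1 => fun s' => ∑ s, ∑ a, stateDist P π μ h s * π s a * P s a s'

/-- Discounted occupancy measure of policy `π`. -/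
noncomputable def occupancy {S A : Type*} [Fintype S] [Fintype A]
    (P : S → A → S → ℝ) (π : S → A → ℝ) (μ : S → ℝ) (γ : ℝ) (s : S) (a : A) : ℝ :=
  (1 - γ) * ∑' h : ℕ, γ ^ h * stateDist P π μ h s * π s a

lemma stateDist_nonneg {S A : Type*} [Fintype S] [Fintype A]
    (P : S → A → S → ℝ) (π : S → A → ℝ) (μ : S → ℝ)
    (hP : ∀ s a s', 0 ≤ P s a s') (hπ : ∀ s a, 0 ≤ π s a) (hμ : ∀ s, 0 ≤ μ s) :
    ∀ h s, 0 ≤ stateDist P π μ h s := by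
  intro h
  induction h with
  | zero => exact hμ
  | succ n ih =>
    intro s'
    simp only [stateDist]
    refine Finset.sum_nonneg fun s _ => Finset.sum_nonneg fun a _ => ?_
    exact mul_nonneg (mul_nonneg (ih s) (hπ s a)) (hP s a s')

lemma stateDist_sum {S A : Type*} [Fintype S] [Fintype A]
    (P : S → A → S → ℝ) (π : S → A → ℝ) (μ : S → ℝ)
    (hPsum : ∀ s a, ∑ s', P s a s' = 1) (hπsum : ∀ s, ∑ a, π s a = 1)
    (hμsum : ∑ s, μ s = 1) :
    ∀ h, ∑ s, stateDist P π μ h s = 1 := by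
  intro h
  induction h with
  | zero => exact hμsum
  | succ n ih =>
    simp only [stateDist]
    rw [Finset.sum_comm]
    calc ∑ s, ∑ s', ∑ a, stateDist P π μ n s * π s a * P s a s'
        = ∑ s, ∑ a, ∑ s', stateDist P π μ n s * π s a * P s a s' := by
          exact Finset.sum_congr rfl fun s _ => Finset.sum_comm
      _ = ∑ s, ∑ a, stateDist P π μ n s * π s a := by
          refine Finset.sum_congr rfl fun s _ => Finset.sum_congr rfl fun a _ => ?_
          rw [← Finset.mul_sum, hPsum, mul_one]
      _ = ∑ s, stateDist P π μ n s := by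
          refine Finset.sum_congr rfl fun s _ => ?_
          rw [← Finset.mul_sum, hπsum, mul_one]
      _ = 1 := ih

theorem occupancy_tv_le {S A : Type*} [Fintype S] [Fintype A]
    (P : S → A → S → ℝ) (π πbar : S → A → ℝ) (μ : S → ℝ) (γ ε : ℝ)
    (hγ : γ ∈ Set.Ioo (0 : ℝ) 1)
    (hP : ∀ s a s', 0 ≤ P s a s') (hPsum : ∀ s a, ∑ s', P s a s' = 1)
    (hπ : ∀ s a, 0 ≤ π s a) (hπsum : ∀ s, ∑ a, π s a = 1)
    (hπbar : ∀ s a, 0 ≤ πbar s a) (hπbarsum : ∀ s, ∑ a, πbar s a = 1)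
    (hμ : ∀ s, 0 ≤ μ s) (hμsum : ∑ s, μ s = 1)
    (hε : ∀ s, (1 / 2) * ∑ a, |π s a - πbar s a| ≤ ε) :
    (1 / 2) * ∑ s, ∑ a, |occupancy P π μ γ s a - occupancy P πbar μ γ s a| ≤
      (1 / (1 - γ)) * ε := by
  obtain ⟨hγ0, hγ1⟩ := hγ
  have hγnn : (0:ℝ) ≤ γ := le_of_lt hγ0
  set ν := stateDist P π μ with hν
  set w := stateDist P πbar μ with hw
  have hνnn : ∀ h s, 0 ≤ ν h s := stateDist_nonneg P π μ hP hπ hμ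
  have hwnn : ∀ h s, 0 ≤ w h s := stateDist_nonneg P πbar μ hP hπbar hμ
  have hνsum : ∀ h, ∑ s, ν h s = 1 := stateDist_sum P π μ hPsum hπsum hμsum
  have hwsum : ∀ h, ∑ s, w h s = 1 := stateDist_sum P πbar μ hPsum hπbarsum hμsum
  have hS : Nonempty S := by
    by_contra hc
    rw [not_nonempty_iff] at hc
    simp [Finset.univ_eq_empty] at hμsum
  have hεnn : 0 ≤ ε := by
    obtain ⟨s0⟩ := hS
    refine le_trans ?_ (hε s0)
    positivity
  have hεsum : ∀ s, ∑ a, |π s a - πbar s a| ≤ 2 * ε := by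
    intro s
    have := hε s
    linarith
  -- one-step bound on state-action gap
  have step : ∀ h, ∑ s, ∑ a, |ν h s * π s a - w h s * πbar s a| ≤
      (∑ s, |ν h s - w h s|) + 2 * ε := by
    intro h
    have h1 : ∀ s, ∑ a, |ν h s * π s a - w h s * πbar s a| ≤
        |ν h s - w h s| + w h s * ∑ a, |π s a - πbar s a| := by
      intro s
      calc ∑ a, |ν h s * π s a - w h s * πbar s a|
          ≤ ∑ a, (|ν h s - w h s| * π s a + w h s * |π s a - πbar s a|) := by
            refine Finset.sum_le_sum fun a _ => ?_
            have : ν h s * π s a - w h s * πbar s a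
                = (ν h s - w h s) * π s a + w h s * (π s a - πbar s a) := by ring
            rw [this]
            refine (abs_add_le _ _).trans ?_
            rw [abs_mul, abs_mul, abs_of_nonneg (hπ s a), abs_of_nonneg (hwnn h s)]
        _ = |ν h s - w h s| + w h s * ∑ a, |π s a - πbar s a| := by
            rw [Finset.sum_add_distrib, ← Finset.mul_sum, ← Finset.mul_sum,
              hπsum, mul_one]
    calc ∑ s, ∑ a, |ν h s * π s a - w h s * πbar s a|
        ≤ ∑ s, (|ν h s - w h s| + w h s * (2 * ε)) := by
          refine Finset.sum_le_sum fun s _ => ?_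
          refine (h1 s).trans ?_
          have := mul_le_mul_of_nonneg_left (hεsum s) (hwnn h s)
          linarith
      _ = (∑ s, |ν h s - w h s|) + (∑ s, w h s) * (2 * ε) := by
          rw [Finset.sum_add_distrib, Finset.sum_mul]
      _ = (∑ s, |ν h s - w h s|) + 2 * ε := by rw [hwsum h]; ring
  -- state gap grows by at most 2ε per step
  have stBound : ∀ h, ∑ s, |ν h s - w h s| ≤ 2 * h * ε := by
    intro h
    induction h with
    | zero => simp [hν, hw, stateDist]
    | succ n ih =>
      have hrec : ∑ s', |ν (n+1) s' - w (n+1) s'| ≤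
          ∑ s, ∑ a, |ν n s * π s a - w n s * πbar s a| := by
        calc ∑ s', |ν (n+1) s' - w (n+1) s'|
            = ∑ s', |∑ s, ∑ a, (ν n s * π s a - w n s * πbar s a) * P s a s'| := by
              refine Finset.sum_congr rfl fun s' _ => ?_
              congr 1
              show stateDist P π μ (n+1) s' - stateDist P πbar μ (n+1) s' = _
              simp only [stateDist, ← Finset.sum_sub_distrib]
              refine Finset.sum_congr rfl fun s _ => Finset.sum_congr rfl fun a _ => ?_
              ring
          _ ≤ ∑ s', ∑ s, ∑ a, |ν n s * π s a - w n s * πbar s a| * P s a s' := by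
              refine Finset.sum_le_sum fun s' _ => ?_
              refine (Finset.abs_sum_le_sum_abs _ _).trans ?_
              refine Finset.sum_le_sum fun s _ => ?_
              refine (Finset.abs_sum_le_sum_abs _ _).trans ?_
              refine Finset.sum_le_sum fun a _ => ?_
              rw [abs_mul, abs_of_nonneg (hP s a s')]
          _ = ∑ s, ∑ a, ∑ s', |ν n s * π s a - w n s * πbar s a| * P s a s' := by
              rw [Finset.sum_comm]
              exact Finset.sum_congr rfl fun s _ => Finset.sum_comm
          _ = ∑ s, ∑ a, |ν n s * π s a - w n s * πbar s a| := by
              refine Finset.sum_congr rfl fun s _ => Finset.sum_congr rfl fun a _ => ?_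
              rw [← Finset.mul_sum, hPsum, mul_one]
      have := (hrec.trans (step n)).trans (by linarith : (∑ s, |ν n s - w n s|) + 2*ε ≤ 2*n*ε + 2*ε)
      push_cast
      linarith
  have key : ∀ h, ∑ s, ∑ a, |ν h s * π s a - w h s * πbar s a| ≤ 2 * (h + 1) * ε := by
    intro h
    have := (step h).trans (by linarith [stBound h] : (∑ s, |ν h s - w h s|) + 2*ε ≤ 2*h*ε + 2*ε)
    push_cast at this ⊢
    linarith
  -- summability facts
  have hgsum : Summable fun h : ℕ => γ ^ h := summable_geometric_of_lt_one hγnn hγ1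
  have hνle1 : ∀ h s, ν h s ≤ 1 := by
    intro h s
    calc ν h s ≤ ∑ s', ν h s' :=
          Finset.single_le_sum (fun s' _ => hνnn h s') (Finset.mem_univ s)
      _ = 1 := hνsum h
  have hwle1 : ∀ h s, w h s ≤ 1 := by
    intro h s
    calc w h s ≤ ∑ s', w h s' :=
          Finset.single_le_sum (fun s' _ => hwnn h s') (Finset.mem_univ s)
      _ = 1 := hwsum h
  have hπle1 : ∀ s a, π s a ≤ 1 := by
    intro s a
    calc π s a ≤ ∑ a', π s a' :=
          Finset.single_le_sum (fun a' _ => hπ s a') (Finset.mem_univ a)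
      _ = 1 := hπsum s
  have hπbarle1 : ∀ s a, πbar s a ≤ 1 := by
    intro s a
    calc πbar s a ≤ ∑ a', πbar s a' :=
          Finset.single_le_sum (fun a' _ => hπbar s a') (Finset.mem_univ a)
      _ = 1 := hπbarsum s
  have summ1 : ∀ s a, Summable fun h : ℕ => γ ^ h * ν h s * π s a := by
    intro s a
    refine Summable.of_nonneg_of_le
      (fun h => mul_nonneg (mul_nonneg (by positivity) (hνnn h s)) (hπ s a))
      (fun h => ?_) hgsum
    calc γ ^ h * ν h s * π s a ≤ γ ^ h * 1 * 1 := by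
          refine mul_le_mul (mul_le_mul le_rfl (hνle1 h s) (hνnn h s) (by positivity))
            (hπle1 s a) (hπ s a) (by positivity)
      _ = γ ^ h := by ring
  have summ2 : ∀ s a, Summable fun h : ℕ => γ ^ h * w h s * πbar s a := by
    intro s a
    refine Summable.of_nonneg_of_le
      (fun h => mul_nonneg (mul_nonneg (by positivity) (hwnn h s)) (hπbar s a))
      (fun h => ?_) hgsum
    calc γ ^ h * w h s * πbar s a ≤ γ ^ h * 1 * 1 := by
          refine mul_le_mul (mul_le_mul le_rfl (hwle1 h s) (hwnn h s) (by positivity))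
            (hπbarle1 s a) (hπbar s a) (by positivity)
      _ = γ ^ h := by ring
  have summD : ∀ s a, Summable fun h : ℕ => γ ^ h * |ν h s * π s a - w h s * πbar s a| := by
    intro s a
    refine Summable.of_nonneg_of_le (fun h => by positivity) (fun h => ?_)
      (hgsum.mul_right 2)
    have h1 : |ν h s * π s a - w h s * πbar s a| ≤ 2 := by
      refine (abs_sub _ _).trans ?_
      have e1 : |ν h s * π s a| ≤ 1 := by
        rw [abs_of_nonneg (mul_nonneg (hνnn h s) (hπ s a))]
        calc ν h s * π s a ≤ 1 * 1 :=
              mul_le_mul (hνle1 h s) (hπle1 s a) (hπ s a) zero_le_one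
          _ = 1 := by ring
      have e2 : |w h s * πbar s a| ≤ 1 := by
        rw [abs_of_nonneg (mul_nonneg (hwnn h s) (hπbar s a))]
        calc w h s * πbar s a ≤ 1 * 1 :=
              mul_le_mul (hwle1 h s) (hπbarle1 s a) (hπbar s a) zero_le_one
          _ = 1 := by ring
      linarith
    exact mul_le_mul_of_nonneg_left h1 (by positivity)
  -- pointwise bound on the occupancy difference
  have hocc : ∀ s a, |occupancy P π μ γ s a - occupancy P πbar μ γ s a| ≤
      (1 - γ) * ∑' h : ℕ, γ ^ h * |ν h s * π s a - w h s * πbar s a| := by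
    intro s a
    have hdiff : occupancy P π μ γ s a - occupancy P πbar μ γ s a =
        (1 - γ) * ∑' h : ℕ, γ ^ h * (ν h s * π s a - w h s * πbar s a) := by
      unfold occupancy
      rw [← mul_sub, ← hν, ← hw, ← Summable.tsum_sub (summ1 s a) (summ2 s a)]
      congr 1
      refine tsum_congr fun h => ?_
      ring
    rw [hdiff, abs_mul, abs_of_nonneg (by linarith : (0:ℝ) ≤ 1 - γ)]
    refine mul_le_mul_of_nonneg_left ?_ (by linarith)
    calc |∑' h : ℕ, γ ^ h * (ν h s * π s a - w h s * πbar s a)|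
        ≤ ∑' h : ℕ, |γ ^ h * (ν h s * π s a - w h s * πbar s a)| := by
          rw [← Real.norm_eq_abs]
          refine (norm_tsum_le_tsum_norm ?_).trans_eq (tsum_congr fun h => by
            rw [Real.norm_eq_abs])
          refine (summD s a).congr fun h => ?_
          rw [Real.norm_eq_abs, abs_mul, abs_of_nonneg (by positivity : (0:ℝ) ≤ γ ^ h)]
      _ = ∑' h : ℕ, γ ^ h * |ν h s * π s a - w h s * πbar s a| := by
          refine tsum_congr fun h => ?_
          rw [abs_mul, abs_of_nonneg (by positivity : (0:ℝ) ≤ γ ^ h)]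
  -- assemble
  have h1γ : (0:ℝ) < 1 - γ := by linarith
  have hgnorm : ‖γ‖ < 1 := by rwa [Real.norm_eq_abs, abs_of_nonneg hγnn]
  have h0 : Summable fun h : ℕ => (h : ℝ) * γ ^ h := by
    have := summable_pow_mul_geometric_of_norm_lt_one (R := ℝ) 1 hgnorm
    simpa using this
  have hs1 : Summable fun h : ℕ => ((h : ℝ) + 1) * γ ^ h :=
    (h0.add hgsum).congr fun h => by ring
  have hs2 : Summable fun h : ℕ => γ ^ h * (2 * ((h : ℝ) + 1) * ε) :=
    (hs1.mul_left (2 * ε)).congr fun h => by ring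
  have hsumg : ∀ h : ℕ, ∑ s, ∑ a, γ ^ h * |ν h s * π s a - w h s * πbar s a| ≤
      γ ^ h * (2 * ((h : ℝ) + 1) * ε) := by
    intro h
    have e : ∑ s, ∑ a, γ ^ h * |ν h s * π s a - w h s * πbar s a|
        = γ ^ h * ∑ s, ∑ a, |ν h s * π s a - w h s * πbar s a| := by
      simp [Finset.mul_sum]
    rw [e]
    have := key h
    push_cast at this ⊢
    nlinarith [pow_nonneg hγnn h, this]
  have hsg : Summable fun h : ℕ => ∑ s, ∑ a, γ ^ h * |ν h s * π s a - w h s * πbar s a| := by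
    refine Summable.of_nonneg_of_le (fun h => ?_) hsumg hs2
    exact Finset.sum_nonneg fun s _ => Finset.sum_nonneg fun a _ => by positivity
  have swap : ∑ s, ∑ a, (∑' h : ℕ, γ ^ h * |ν h s * π s a - w h s * πbar s a|)
      = ∑' h : ℕ, ∑ s, ∑ a, γ ^ h * |ν h s * π s a - w h s * πbar s a| := by
    have e1 : ∑ s, ∑ a, (∑' h : ℕ, γ ^ h * |ν h s * π s a - w h s * πbar s a|)
        = ∑ p : S × A, ∑' h : ℕ, γ ^ h * |ν h p.1 * π p.1 p.2 - w h p.1 * πbar p.1 p.2| :=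
      (Fintype.sum_prod_type (f := fun p : S × A =>
        ∑' h : ℕ, γ ^ h * |ν h p.1 * π p.1 p.2 - w h p.1 * πbar p.1 p.2|)).symm
    have e2 : ∑' h : ℕ, ∑ p : S × A, γ ^ h * |ν h p.1 * π p.1 p.2 - w h p.1 * πbar p.1 p.2|
        = ∑ p : S × A, ∑' h : ℕ, γ ^ h * |ν h p.1 * π p.1 p.2 - w h p.1 * πbar p.1 p.2| :=
      Summable.tsum_finsetSum fun p _ => summD p.1 p.2
    rw [e1, ← e2]
    exact tsum_congr fun h => Fintype.sum_prod_type (f := fun p : S × A =>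
      γ ^ h * |ν h p.1 * π p.1 p.2 - w h p.1 * πbar p.1 p.2|)
  have tlin : ∑' h : ℕ, (h : ℝ) * γ ^ h = γ / (1 - γ) ^ 2 :=
    tsum_coe_mul_geometric_of_norm_lt_one hgnorm
  have tgeo : ∑' h : ℕ, γ ^ h = (1 - γ)⁻¹ := tsum_geometric_of_lt_one hγnn hγ1
  have tfin : ∑' h : ℕ, γ ^ h * (2 * ((h : ℝ) + 1) * ε) = 2 * ε * (1 / (1 - γ) ^ 2) := by
    have e : (fun h : ℕ => γ ^ h * (2 * ((h : ℝ) + 1) * ε))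
        = fun h : ℕ => (2 * ε) * ((h : ℝ) * γ ^ h + γ ^ h) := by
      funext h; ring
    rw [e, tsum_mul_left, Summable.tsum_add h0 hgsum, tlin, tgeo]
    field_simp
    ring
  calc (1 / 2) * ∑ s, ∑ a, |occupancy P π μ γ s a - occupancy P πbar μ γ s a|
      ≤ (1 / 2) * ∑ s, ∑ a,
          (1 - γ) * ∑' h : ℕ, γ ^ h * |ν h s * π s a - w h s * πbar s a| := by
        refine mul_le_mul_of_nonneg_left ?_ (by norm_num)
        exact Finset.sum_le_sum fun s _ => Finset.sum_le_sum fun a _ => hocc s a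
    _ = (1 / 2) * (1 - γ) *
          ∑ s, ∑ a, ∑' h : ℕ, γ ^ h * |ν h s * π s a - w h s * πbar s a| := by
        simp only [← Finset.mul_sum]
        ring
    _ = (1 / 2) * (1 - γ) *
          ∑' h : ℕ, ∑ s, ∑ a, γ ^ h * |ν h s * π s a - w h s * πbar s a| := by rw [swap]
    _ ≤ (1 / 2) * (1 - γ) * ∑' h : ℕ, γ ^ h * (2 * ((h : ℝ) + 1) * ε) := by
        refine mul_le_mul_of_nonneg_left ?_ (by positivity)
        exact Summable.tsum_le_tsum hsumg hsg hs2
    _ = (1 / (1 - γ)) * ε := by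
        rw [tfin]
        field_simp
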